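/- Let A_1, …, A_m be symmetric n×n complex matrices with maximum pencil rank r, where A(λ) = Σ_{j=1}^m λ_j A_j. Then dim(⋂_{j=1}^m ker A_j) = n − r if and only if there exists an invertible Q ∈ M_n(ℂ) such that Q^T A_j Q = Ã_j ⊕ 0_{n−r} for all j = 1, …, m, where each Ã_j ∈ M_r(ℂ) is symmetric. Moreover, for any such Q and Ã_1, …, Ã_m and any λ_0 ∈ ℂ^m with rank A(λ_0) = r, the matrix Ã(λ_0) = Σ_{j=1}^m (λ_0)_j Ã_j is an invertible r×r matrix. -/

import Mathlib

/-! If the last `n - r` columns of an invertible `Q` span the common kernel `K = ⋂ ker A_j`, then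
the last columns of every `Qᵀ A_j Q` vanish, and by symmetry so do its last rows: this is the
block form. Conversely, write the block form as `E Ã_j Eᵀ` with `E` the coordinate embedding
`ℂ^r → ℂ^n`, so that `Eᵀ E = 1`. Congruence preserves ranks and kernel dimensions, hence
`rank Ã(λ₀) = rank A(λ₀) = r` makes `Ã(λ₀)` invertible, and then the common kernel of the
`E Ã_j Eᵀ` is exactly `ker Eᵀ`, of dimension `n - r`. -/

open Matrix

/-- For `B ∈ M_r(ℂ)`, the block-diagonal matrix `B ⊕ 0_{n−r} ∈ M_n(ℂ)` having `B` in
the top-left r×r corner and zeros elsewhere. -/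
def blockOplusZero (n r : ℕ) (B : Matrix (Fin r) (Fin r) ℂ) : Matrix (Fin n) (Fin n) ℂ :=
  fun i k => if h : (i : ℕ) < r ∧ (k : ℕ) < r then B ⟨i, h.1⟩ ⟨k, h.2⟩ else 0

open Module

namespace Matrix

section Congruence

variable {R K : Type*} [CommRing R] [Field K] {m n ι J : Type*} [Fintype n]

theorem IsSymm.transpose_mul_mul {A : Matrix n n R} (hA : A.IsSymm) (Q : Matrix n m R) :
    (Qᵀ * A * Q).IsSymm := by
  simp only [IsSymm, transpose_mul, transpose_transpose, hA.eq, Matrix.mul_assoc]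

theorem mul_sum_smul_mul [Fintype J] (L : Matrix m n R) (A : J → Matrix n n R) (M : Matrix n ι R)
    (c : J → R) : L * (∑ j, c j • A j) * M = ∑ j, c j • (L * A j * M) := by
  simp only [Matrix.mul_sum, Matrix.sum_mul, Matrix.mul_smul, Matrix.smul_mul]

theorem IsSymm.transpose_mul_mul_apply_eq_zero {A Q : Matrix n n R} (hA : A.IsSymm) {k : n}
    (hk : A *ᵥ Qᵀ k = 0) (i : n) : (Qᵀ * A * Q) i k = 0 ∧ (Qᵀ * A * Q) k i = 0 := by
  have hik : (Qᵀ * A * Q) i k = 0 := by rw [mul_mul_apply, hk, dotProduct_zero]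
  exact ⟨hik, (hA.transpose_mul_mul Q).apply i k ▸ hik⟩

theorem isUnit_of_rank_eq_card [DecidableEq n] {M : Matrix n n K} (h : M.rank = Fintype.card n) :
    IsUnit M := by
  rw [← mulVec_surjective_iff_isUnit, ← coe_mulVecLin, ← LinearMap.range_eq_top]
  apply Submodule.eq_top_of_finrank_eq
  rw [← rank, h, finrank_fintype_fun_eq_card]

theorem rank_transpose_mul_mul_of_isUnit [DecidableEq n] {Q : Matrix n n R} (hQ : IsUnit Q)
    (M : Matrix n n R) : (Qᵀ * M * Q).rank = M.rank := by
  have hdet := (isUnit_iff_isUnit_det Q).mp hQ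
  rw [rank_mul_eq_left_of_isUnit_det _ _ hdet,
    rank_mul_eq_right_of_isUnit_det _ _ (by rwa [det_transpose])]

theorem ker_mulVecLin_transpose_mul_mul [DecidableEq n] {Q : Matrix n n K} (hQ : IsUnit Q)
    (M : Matrix n n K) :
    LinearMap.ker (Qᵀ * M * Q).mulVecLin = (LinearMap.ker M.mulVecLin).comap Q.mulVecLin := by
  have hinj : Function.Injective Qᵀ.mulVec :=
    mulVec_injective_iff_isUnit.mpr ((isUnit_transpose Q).mpr hQ)
  ext x
  simp only [LinearMap.mem_ker, Submodule.mem_comap, mulVecLin_apply, ← mulVec_mulVec]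
  exact hinj.eq_iff' (mulVec_zero _)

theorem finrank_iInf_ker_transpose_mul_mul [DecidableEq n] {Q : Matrix n n K} (hQ : IsUnit Q)
    (A : J → Matrix n n K) :
    finrank K ↥(⨅ j, LinearMap.ker (Qᵀ * A j * Q).mulVecLin)
      = finrank K ↥(⨅ j, LinearMap.ker (A j).mulVecLin) := by
  let e := Q.toLinearEquiv' hQ.invertible
  have he : (e : (n → K) →ₗ[K] n → K) = Q.mulVecLin := rfl
  rw [iInf_congr fun j => ker_mulVecLin_transpose_mul_mul hQ (A j), ← Submodule.comap_iInf, ← he,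
    Submodule.comap_equiv_eq_map_symm, LinearEquiv.finrank_map_eq]

end Congruence

section Isometry

variable {K : Type*} [Field K] {n ι J : Type*} [Fintype n] [DecidableEq ι] [Fintype ι]
  {E : Matrix n ι K}

theorem rank_mul_mul_transpose_of_transpose_mul_self (hE : Eᵀ * E = 1) (B : Matrix ι ι K) :
    (E * B * Eᵀ).rank = B.rank := by
  refine le_antisymm ((rank_mul_le_left _ _).trans (rank_mul_le_right _ _)) ?_
  calc B.rank = (Eᵀ * (E * B * Eᵀ) * E).rank := by
        rw [show Eᵀ * (E * B * Eᵀ) * E = Eᵀ * E * B * (Eᵀ * E) by simp only [Matrix.mul_assoc],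
          hE, Matrix.one_mul, Matrix.mul_one]
    _ ≤ (E * B * Eᵀ).rank := (rank_mul_le_left _ _).trans (rank_mul_le_right _ _)

theorem finrank_ker_transpose_of_transpose_mul_self (hE : Eᵀ * E = 1) :
    finrank K ↥(LinearMap.ker Eᵀ.mulVecLin) = Fintype.card n - Fintype.card ι := by
  have hrank : Eᵀ.rank = Fintype.card ι := le_antisymm (rank_le_card_height _) (by
    calc Fintype.card ι = (Eᵀ * E).rank := by rw [hE, rank_one]
      _ ≤ Eᵀ.rank := rank_mul_le_left _ _)
  have := LinearMap.finrank_range_add_finrank_ker Eᵀ.mulVecLin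
  rw [← rank, hrank, finrank_fintype_fun_eq_card] at this
  omega

theorem iInf_ker_mul_mul_transpose_of_isUnit_sum [Fintype J] (hE : Eᵀ * E = 1)
    {B : J → Matrix ι ι K} (c : J → K) (hc : IsUnit (∑ j, c j • B j)) :
    ⨅ j, LinearMap.ker (E * B j * Eᵀ).mulVecLin = LinearMap.ker Eᵀ.mulVecLin := by
  have hEE : ∀ y, Eᵀ *ᵥ (E *ᵥ y) = y := fun y => by rw [mulVec_mulVec, hE, one_mulVec]
  ext x
  simp only [Submodule.mem_iInf, LinearMap.mem_ker, mulVecLin_apply, ← mulVec_mulVec]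
  constructor
  · intro hx
    have hB : ∀ j, B j *ᵥ (Eᵀ *ᵥ x) = 0 := fun j => by rw [← hEE (B j *ᵥ _), hx j, mulVec_zero]
    apply mulVec_injective_iff_isUnit.mpr hc
    simp only [mulVec_zero, sum_mulVec, smul_mulVec, hB, smul_zero, Finset.sum_const_zero]
  · intro hx j
    rw [hx, mulVec_zero, mulVec_zero]

end Isometry

section CastLE

def castLE (R : Type*) [Semiring R] {n r : ℕ} (h : r ≤ n) : Matrix (Fin n) (Fin r) R :=
  (1 : Matrix (Fin n) (Fin n) R).submatrix id (Fin.castLE h)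

variable {R : Type*} [Semiring R] {n r : ℕ}

theorem transpose_castLE_mul_castLE (h : r ≤ n) :
    (castLE R h)ᵀ * castLE R h = 1 := by
  rw [castLE, transpose_submatrix, transpose_one, ← submatrix_mul _ _ _ _ _ Function.bijective_id,
    Matrix.one_mul, submatrix_one _ (Fin.castLE_injective h)]

theorem castLE_apply_of_le (h : r ≤ n) {i : Fin n} (hi : r ≤ (i : ℕ)) (p : Fin r) :
    castLE R h i p = 0 :=
  one_apply_ne fun hip => by
    rw [id_eq] at hip
    rw [hip, Fin.val_castLE] at hi
    exact absurd p.isLt (by omega)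

end CastLE

end Matrix

theorem blockOplusZero_eq_castLE_mul_mul_transpose {n r : ℕ} (h : r ≤ n)
    (B : Matrix (Fin r) (Fin r) ℂ) :
    blockOplusZero n r B = castLE ℂ h * B * (castLE ℂ h)ᵀ := by
  ext i k
  by_cases hik : (i : ℕ) < r ∧ (k : ℕ) < r
  · obtain ⟨p, rfl⟩ : ∃ p, Fin.castLE h p = i := ⟨⟨i, hik.1⟩, rfl⟩
    obtain ⟨q, rfl⟩ : ∃ q, Fin.castLE h q = k := ⟨⟨k, hik.2⟩, rfl⟩
    simp [blockOplusZero, castLE, mul_apply, one_apply, Fin.castLE_inj]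
  · simp only [blockOplusZero, hik, dite_false]
    rcases not_and_or.mp hik with hi | hk
    · simp [mul_apply, castLE_apply_of_le h (Nat.le_of_not_lt hi)]
    · simp [mul_apply, castLE_apply_of_le h (Nat.le_of_not_lt hk)]

theorem blockOplusZero_submatrix_castLE {n r : ℕ} (h : r ≤ n) (M : Matrix (Fin n) (Fin n) ℂ)
    (hM : ∀ i k : Fin n, r ≤ (i : ℕ) ∨ r ≤ (k : ℕ) → M i k = 0) :
    blockOplusZero n r (M.submatrix (Fin.castLE h) (Fin.castLE h)) = M := by
  ext i k
  by_cases hik : (i : ℕ) < r ∧ (k : ℕ) < r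
  · simp [blockOplusZero, hik]
  · simp only [blockOplusZero, hik, dite_false]
    exact (hM i k (by omega)).symm

theorem Submodule.exists_isUnit_rows_mem_of_finrank_eq {K : Type*} [Field K] {n r : ℕ} (h : r ≤ n)
    (W : Submodule K (Fin n → K)) (hW : finrank K W = n - r) :
    ∃ P : Matrix (Fin n) (Fin n) K, IsUnit P ∧ ∀ k : Fin n, r ≤ (k : ℕ) → P k ∈ W := by
  obtain ⟨U, hUW⟩ := W.exists_isCompl
  have hU : finrank K U = r := by
    have := Submodule.finrank_add_eq_of_isCompl hUW
    rw [hW, finrank_fin_fun] at this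
    omega
  let b : Basis (Fin r ⊕ Fin (n - r)) K (Fin n → K) :=
    ((finBasisOfFinrankEq K U hU).prod (finBasisOfFinrankEq K W hW)).map
      (Submodule.prodEquivOfIsCompl U W hUW.symm)
  let e : Fin n ≃ Fin r ⊕ Fin (n - r) :=
    (finCongr (Nat.add_sub_cancel' h).symm).trans finSumFinEquiv.symm
  refine ⟨Matrix.of fun k => b (e k),
    linearIndependent_rows_iff_isUnit.mp (b.linearIndependent.comp e e.injective), fun k hk => ?_⟩
  have hek : e k = Sum.inr ⟨k - r, by omega⟩ := by
    rw [← finSumFinEquiv_symm_apply_natAdd]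
    simp only [e, Equiv.trans_apply, finCongr_apply]
    congr 1
    ext
    simp only [Fin.val_cast, Fin.val_natAdd]
    omega
  show b (e k) ∈ W
  simp [hek, b]

section CongruentBlockForm

variable {ι : Type*} {n r : ℕ} {A : ι → Matrix (Fin n) (Fin n) ℂ}

theorem exists_congr_blockOplusZero_of_finrank_iInf_ker (h : r ≤ n) (hA : ∀ j, (A j).IsSymm)
    (hK : finrank ℂ ↥(⨅ j, LinearMap.ker (A j).mulVecLin) = n - r) :
    ∃ Q : Matrix (Fin n) (Fin n) ℂ, IsUnit Q ∧
      ∃ At : ι → Matrix (Fin r) (Fin r) ℂ, (∀ j, (At j)ᵀ = At j) ∧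
        ∀ j, Qᵀ * A j * Q = blockOplusZero n r (At j) := by
  obtain ⟨P, hP, hPK⟩ := Submodule.exists_isUnit_rows_mem_of_finrank_eq h _ hK
  refine ⟨Pᵀ, (isUnit_transpose P).mpr hP,
    fun j => (Pᵀᵀ * A j * Pᵀ).submatrix (Fin.castLE h) (Fin.castLE h),
    fun j => ((hA j).transpose_mul_mul _).submatrix _,
    fun j => (blockOplusZero_submatrix_castLE h _ fun i k hik => ?_).symm⟩
  have hcol : ∀ k : Fin n, r ≤ (k : ℕ) → A j *ᵥ Pᵀᵀ k = 0 := fun k hk => by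
    rw [transpose_transpose]
    exact (Submodule.mem_iInf _).mp (hPK k hk) j
  rcases hik with hi | hk
  · exact ((hA j).transpose_mul_mul_apply_eq_zero (hcol i hi) k).2
  · exact ((hA j).transpose_mul_mul_apply_eq_zero (hcol k hk) i).1

variable [Fintype ι] {Q : Matrix (Fin n) (Fin n) ℂ} {At : ι → Matrix (Fin r) (Fin r) ℂ}

theorem finrank_iInf_ker_of_congr_blockOplusZero (h : r ≤ n) (hQ : IsUnit Q)
    (hQA : ∀ j, Qᵀ * A j * Q = blockOplusZero n r (At j)) (c : ι → ℂ)
    (hc : IsUnit (∑ j, c j • At j)) :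
    finrank ℂ ↥(⨅ j, LinearMap.ker (A j).mulVecLin) = n - r := by
  have hblock : (⨅ j, LinearMap.ker (Qᵀ * A j * Q).mulVecLin)
      = ⨅ j, LinearMap.ker (castLE ℂ h * At j * (castLE ℂ h)ᵀ).mulVecLin := by
    simp_rw [hQA, blockOplusZero_eq_castLE_mul_mul_transpose h]
  rw [← finrank_iInf_ker_transpose_mul_mul hQ, hblock,
    iInf_ker_mul_mul_transpose_of_isUnit_sum (transpose_castLE_mul_castLE h) c hc,
    finrank_ker_transpose_of_transpose_mul_self (transpose_castLE_mul_castLE h),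
    Fintype.card_fin, Fintype.card_fin]

theorem isUnit_sum_smul_of_congr_blockOplusZero (h : r ≤ n) (hQ : IsUnit Q)
    (hQA : ∀ j, Qᵀ * A j * Q = blockOplusZero n r (At j)) (c : ι → ℂ)
    (hc : (∑ j, c j • A j).rank = r) : IsUnit (∑ j, c j • At j) := by
  apply isUnit_of_rank_eq_card
  rw [Fintype.card_fin, ← rank_mul_mul_transpose_of_transpose_mul_self
    (transpose_castLE_mul_castLE h), mul_sum_smul_mul]
  simp_rw [← blockOplusZero_eq_castLE_mul_mul_transpose h, ← hQA, ← mul_sum_smul_mul,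
    rank_transpose_mul_mul_of_isUnit hQ, hc]

end CongruentBlockForm

/-- Let A_1, …, A_m be symmetric n×n complex matrices with maximum pencil
rank r. Then dim(⋂_j ker A_j) = n − r iff there is an invertible Q with
Qᵀ A_j Q = Ã_j ⊕ 0_{n−r} for symmetric Ã_j ∈ M_r(ℂ).  Moreover, for any such Q and Ã_j
and any λ₀ with rank A(λ₀) = r, the matrix Ã(λ₀) = Σ_j (λ₀)_j Ã_j is invertible. -/
theorem dim_ker_iff_congruent_block_form (n m : ℕ)
    (A : Fin m → Matrix (Fin n) (Fin n) ℂ) (hsymm : ∀ j, (A j)ᵀ = A j) (r : ℕ)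
    (hr : r = ⨆ lam : Fin m → ℂ, (∑ j, lam j • A j).rank) :
    ((Module.finrank ℂ ↥(⨅ j, LinearMap.ker (A j).mulVecLin) = n - r) ↔
      (∃ Q : Matrix (Fin n) (Fin n) ℂ, IsUnit Q ∧
        ∃ At : Fin m → Matrix (Fin r) (Fin r) ℂ, (∀ j, (At j)ᵀ = At j) ∧
          ∀ j, Qᵀ * A j * Q = blockOplusZero n r (At j))) ∧
    (∀ (Q : Matrix (Fin n) (Fin n) ℂ) (At : Fin m → Matrix (Fin r) (Fin r) ℂ),
      IsUnit Q → (∀ j, (At j)ᵀ = At j) →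
      (∀ j, Qᵀ * A j * Q = blockOplusZero n r (At j)) →
      ∀ lam₀ : Fin m → ℂ, (∑ j, lam₀ j • A j).rank = r →
        IsUnit (∑ j, lam₀ j • At j)) := by
  have hbdd : BddAbove (Set.range fun lam : Fin m → ℂ => (∑ j, lam j • A j).rank) :=
    ⟨n, Set.forall_mem_range.mpr fun _ => rank_le_height _⟩
  have hrn : r ≤ n := hr ▸ ciSup_le fun _ => rank_le_height _
  obtain ⟨lam₀, hlam₀⟩ : ∃ lam₀ : Fin m → ℂ, (∑ j, lam₀ j • A j).rank = r :=
    hr ▸ Nat.sSup_mem (Set.range_nonempty _) hbdd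
  refine ⟨⟨exists_congr_blockOplusZero_of_finrank_iInf_ker hrn hsymm, ?_⟩,
    fun Q At hQ _ hQA => isUnit_sum_smul_of_congr_blockOplusZero hrn hQ hQA⟩
  rintro ⟨Q, hQ, At, -, hQA⟩
  exact finrank_iInf_ker_of_congr_blockOplusZero hrn hQ hQA lam₀
    (isUnit_sum_smul_of_congr_blockOplusZero hrn hQ hQA lam₀ hlam₀)
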